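/- For every n ≥ 1 there exists a k-linear map P : D*^{⊗n} → D*^{⊗n} that commutes with the differential, is idempotent (P∘P = P), has image exactly the reduced subcomplex D*^{⊗̄n}, and restricts to the identity on D*^{⊗̄n}. (P sends a tensor f₁⊗⋯⊗f_n of elements of {1} ∪ {Y_s} ∪ {ω_s} to itself if the singular supports of the f_i are pairwise disjoint, and to 0 otherwise.) -/
import Mathlib


/-- Basis labels for the differential graded algebra `D*` over `k`:
`one` is the constant function `1` (degree 0), `Y s` is the Heaviside function
with singular support `{s}` (degree 0), and `om s` is the Dirac function with
singular support `{s}` (degree 1). -/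
inductive DB : Type
  | one : DB
  | Y : ℤ → DB
  | om : ℤ → DB
  deriving DecidableEq

/-- cohomological degree of a basis element -/
def DB.deg : DB → ℕ
  | .one => 0
  | .Y _ => 0
  | .om _ => 1

/-- singular support of a basis element -/
def DB.supp : DB → Finset ℤ
  | .one => ∅
  | .Y s => {s}
  | .om s => {s}

variable (k : Type) [CommRing k]

/-- The `n`-fold tensor power `D*^{⊗n}` of the complex `D*` over `k`, modelled as the
free `k`-module on the basis of decomposable tensors `f₁ ⊗ ⋯ ⊗ f_n` of basis elements. -/
abbrev Tot (n : ℕ) : Type := (Fin n → DB) →₀ k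

/-- total (cohomological) degree of a basis tensor -/
def degT {n : ℕ} (g : Fin n → DB) : ℕ := ∑ i, (g i).deg

/-- the homogeneous degree-`i` component of `D*^{⊗n}` -/
def homog (n i : ℕ) : Submodule k (Tot k n) where
  carrier := {x | ∀ g, x g ≠ 0 → degT g = i}
  add_mem' := by
    intro x y hx hy g hg
    by_cases h : x g = 0
    · refine hy g ?_
      intro h'; apply hg; simp [Finsupp.add_apply, h, h']
    · exact hx g h
  zero_mem' := by intro g hg; simp at hg
  smul_mem' := by
    intro c x hx g hg
    refine hx g fun h => hg ?_
    simp [Finsupp.smul_apply, h]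

lemma mem_homog {n i : ℕ} {x : Tot k n} :
    x ∈ homog k n i ↔ ∀ g, x g ≠ 0 → degT g = i := Iff.rfl

/-- `I` : the span of the basis tensors `f₀ ⊗ ⋯ ⊗ f_r` in which every factor is a
Heaviside or a Dirac function (no factor equals `1`). -/
def noOne (n : ℕ) : Submodule k (Tot k n) where
  carrier := {x | ∀ g, x g ≠ 0 → ∀ i, g i ≠ DB.one}
  add_mem' := by
    intro x y hx hy g hg
    by_cases h : x g = 0
    · refine hy g ?_
      intro h'; apply hg; simp [Finsupp.add_apply, h, h']
    · exact hx g h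
  zero_mem' := by intro g hg; simp at hg
  smul_mem' := by
    intro c x hx g hg
    refine hx g fun h => hg ?_
    simp [Finsupp.smul_apply, h]

lemma mem_noOne {n : ℕ} {x : Tot k n} :
    x ∈ noOne k n ↔ ∀ g, x g ≠ 0 → ∀ i, g i ≠ DB.one := Iff.rfl

/-- The Koszul-sign differential on a basis tensor:
`d(f₁ ⊗ ⋯ ⊗ f_n) = Σ_i (-1)^{deg f₁ + ⋯ + deg f_{i-1}} f₁ ⊗ ⋯ ⊗ d f_i ⊗ ⋯ ⊗ f_n`,
where `d(Y s) = - ω_s`, `d 1 = 0`, `d (ω s) = 0`. -/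
noncomputable def dB {n : ℕ} (g : Fin n → DB) : Tot k n :=
  ∑ i : Fin n,
    match g i with
    | DB.Y s =>
        Finsupp.single (Function.update g i (DB.om s))
          (-(-1 : k) ^ (∑ j ∈ Finset.univ.filter (fun j : Fin n => j < i), (g j).deg))
    | _ => (0 : Tot k n)

/-- the total differential of the complex `D*^{⊗n}` (it raises degree by one) -/
noncomputable def dT (n : ℕ) : Tot k n →ₗ[k] Tot k n :=
  Finsupp.linearCombination k (dB k (n := n))


/-- The reduced subcomplex `D*^{⊗̄n} ⊆ D*^{⊗n}` : the span of the basis tensors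
`f₁ ⊗ ⋯ ⊗ f_n` whose factors have pairwise disjoint singular supports. -/
def reduced (n : ℕ) : Submodule k (Tot k n) where
  carrier := {x | ∀ g, x g ≠ 0 → ∀ i j : Fin n, i ≠ j → Disjoint ((g i).supp) ((g j).supp)}
  add_mem' := by
    intro x y hx hy g hg
    by_cases h : x g = 0
    · refine hy g ?_
      intro h'; apply hg; simp [Finsupp.add_apply, h, h']
    · exact hx g h
  zero_mem' := by intro g hg; simp at hg
  smul_mem' := by
    intro c x hx g hg
    refine hx g fun h => hg ?_
    simp [Finsupp.smul_apply, h]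

lemma mem_reduced {n : ℕ} {x : Tot k n} :
    x ∈ reduced k n ↔
      ∀ g, x g ≠ 0 → ∀ i j : Fin n, i ≠ j → Disjoint ((g i).supp) ((g j).supp) := Iff.rfl


def Red {n : ℕ} (g : Fin n → DB) : Prop :=
  ∀ i j : Fin n, i ≠ j → Disjoint ((g i).supp) ((g j).supp)

instance {n : ℕ} : DecidablePred (Red (n := n)) := fun g => by
  unfold Red; infer_instance

noncomputable def Pmap (n : ℕ) : Tot k n →ₗ[k] Tot k n where
  toFun x := x.filter Red
  map_add' _ _ := Finsupp.filter_add
  map_smul' _ _ := Finsupp.filter_smul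

lemma red_update {n : ℕ} (g : Fin n → DB) (i : Fin n) (s : ℤ) (h : g i = DB.Y s) :
    Red (Function.update g i (DB.om s)) ↔ Red g := by
  have key : ∀ j, ((Function.update g i (DB.om s)) j).supp = (g j).supp := by
    intro j
    rcases eq_or_ne j i with rfl | hj
    · simp [Function.update_self, h, DB.supp]
    · simp [Function.update_of_ne hj]
  simp only [Red, key]

lemma filter_dB {n : ℕ} (g : Fin n → DB) :
    (dB k g).filter Red = if Red g then dB k g else 0 := by
  have : (dB k g).filter Red = Pmap k n (dB k g) := rfl
  rw [this]; unfold dB; rw [map_sum]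
  have hterm : ∀ i : Fin n,
      Pmap k n ((match g i with
        | DB.Y s =>
            Finsupp.single (Function.update g i (DB.om s))
              (-(-1 : k) ^ (∑ j ∈ Finset.univ.filter (fun j : Fin n => j < i), (g j).deg))
        | _ => (0 : Tot k n))) =
      if Red g then (match g i with
        | DB.Y s =>
            Finsupp.single (Function.update g i (DB.om s))
              (-(-1 : k) ^ (∑ j ∈ Finset.univ.filter (fun j : Fin n => j < i), (g j).deg))
        | _ => (0 : Tot k n)) else 0 := by
    intro i
    cases hgi : g i with
    | one => simp
    | om s => simp
    | Y s =>
        simp only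
        show (Finsupp.single (Function.update g i (DB.om s)) _).filter Red = _
        by_cases hr : Red g
        · rw [Finsupp.filter_single_of_pos _ ((red_update g i s hgi).mpr hr), if_pos hr]
        · rw [Finsupp.filter_single_of_neg _ (fun hc => hr ((red_update g i s hgi).mp hc)),
            if_neg hr]
  rw [Finset.sum_congr rfl (fun i _ => hterm i)]
  by_cases hr : Red g
  · simp only [if_pos hr]
  · simp [if_neg hr]

/-- For every `n ≥ 1` there exists a `k`-linear map
`P : D*^{⊗n} → D*^{⊗n}` commuting with the differential, idempotent, with image exactly
the reduced subcomplex `D*^{⊗̄n}`, restricting to the identity on `D*^{⊗̄n}`, and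
sending a basis tensor to itself if the singular supports of its factors are pairwise
disjoint and to `0` otherwise. -/
theorem statement5 (k : Type) [CommRing k] (n : ℕ) (hn : 1 ≤ n) :
    ∃ P : Tot k n →ₗ[k] Tot k n,
      P.comp (dT k n) = (dT k n).comp P ∧
      P.comp P = P ∧
      LinearMap.range P = reduced k n ∧
      (∀ x ∈ reduced k n, P x = x) ∧
      (∀ g : Fin n → DB, (∀ i j : Fin n, i ≠ j → Disjoint ((g i).supp) ((g j).supp)) →
          P (Finsupp.single g (1 : k)) = Finsupp.single g (1 : k)) ∧
      (∀ g : Fin n → DB, ¬ (∀ i j : Fin n, i ≠ j → Disjoint ((g i).supp) ((g j).supp)) →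
          P (Finsupp.single g (1 : k)) = 0) := by
    classical
  refine ⟨Pmap k n, ?_, ?_, ?_, ?_, ?_, ?_⟩
  · -- commutes with dT
    apply Finsupp.lhom_ext
    intro g b
    have hd : dT k n (Finsupp.single g b) = b • dB k g := by
      simp [dT, Finsupp.linearCombination_single]
    have hp : Pmap k n (Finsupp.single g b) =
        if Red g then Finsupp.single g b else 0 := by
      show (Finsupp.single g b).filter Red = _
      by_cases hr : Red g
      · rw [Finsupp.filter_single_of_pos _ hr, if_pos hr]
      · rw [Finsupp.filter_single_of_neg _ hr, if_neg hr]
    simp only [LinearMap.comp_apply, hd, hp, map_smul]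
    have : Pmap k n (dB k g) = if Red g then dB k g else 0 := filter_dB k g
    rw [this]
    by_cases hr : Red g
    · simp only [if_pos hr, hd]
    · simp [if_neg hr]
  · -- idempotent
    apply Finsupp.lhom_ext
    intro g b
    simp only [LinearMap.comp_apply]
    show ((Finsupp.single g b).filter Red).filter Red = (Finsupp.single g b).filter Red
    by_cases hr : Red g
    · rw [Finsupp.filter_single_of_pos _ hr, Finsupp.filter_single_of_pos _ hr]
    · rw [Finsupp.filter_single_of_neg _ hr, Finsupp.filter_zero]
  · -- range
    ext x
    constructor
    · rintro ⟨y, rfl⟩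
      intro g hg i j hij
      have : Red g := by
        by_contra hr
        apply hg
        show (y.filter Red) g = 0
        rw [Finsupp.filter_apply, if_neg hr]
      exact this i j hij
    · intro hx
      refine ⟨x, ?_⟩
      ext g
      show (x.filter Red) g = x g
      rw [Finsupp.filter_apply]
      by_cases hr : Red g
      · rw [if_pos hr]
      · rw [if_neg hr]
        by_contra h
        exact hr (hx g (fun hc => h hc.symm))
  · -- identity on reduced
    intro x hx
    ext g
    show (x.filter Red) g = x g
    rw [Finsupp.filter_apply]
    by_cases hr : Red g
    · rw [if_pos hr]
    · rw [if_neg hr]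
      by_contra h
      exact hr (hx g (fun hc => h hc.symm))
  · intro g hg
    exact Finsupp.filter_single_of_pos _ hg
  · intro g hg
    exact Finsupp.filter_single_of_neg _ hg
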